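/- Let ε = 0.148 and for real z ≥ 5 + ε define A(z) = (2z² − 1)·√((z − ε)² + 1) − (2z³ + (1 − 2z²)·ε), B(z) = (z − 2)·(√((z − ε)² + 1) + ε), and C(z) = −(z² − z + 1)·(√((z − ε)² + 1) + ε). Then for every z ≥ 5 + ε one has A(z) > 0 and C(z) < 0, so the quadratic p_z(i) = A(z)·i² + B(z)·i + C(z) has a unique positive real root i(z), and lim_{z→∞} (i(z) − z) = 1 − ε. -/
import Mathlib

open Filter Real
set_option maxHeartbeats 1000000

/-- With `ε = 0.148`: `A(z) = (2z² − 1)√((z − ε)² + 1) − (2z³ + (1 − 2z²)ε)`. -/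
noncomputable def Afun (z : ℝ) : ℝ :=
  (2 * z ^ 2 - 1) * Real.sqrt ((z - 0.148) ^ 2 + 1) - (2 * z ^ 3 + (1 - 2 * z ^ 2) * 0.148)

/-- With `ε = 0.148`: `B(z) = (z − 2)(√((z − ε)² + 1) + ε)`. -/
noncomputable def Bfun (z : ℝ) : ℝ :=
  (z - 2) * (Real.sqrt ((z - 0.148) ^ 2 + 1) + 0.148)

/-- With `ε = 0.148`: `C(z) = −(z² − z + 1)(√((z − ε)² + 1) + ε)`. -/
noncomputable def Cfun (z : ℝ) : ℝ :=
  -((z ^ 2 - z + 1) * (Real.sqrt ((z - 0.148) ^ 2 + 1) + 0.148))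

noncomputable def iroot0 (z : ℝ) : ℝ :=
  (-Bfun z + Real.sqrt (Bfun z ^ 2 - 4 * Afun z * Cfun z)) / (2 * Afun z)

lemma hApos (z : ℝ) (hz : (5.148:ℝ) ≤ z) : 0 < Afun z := by
  have hs0 : 0 < Real.sqrt ((z - 0.148) ^ 2 + 1) := Real.sqrt_pos.2 (by positivity)
  have hs2 : Real.sqrt ((z - 0.148) ^ 2 + 1) ^ 2 = (z - 0.148) ^ 2 + 1 :=
    Real.sq_sqrt (by positivity)
  rw [Afun]
  set s := Real.sqrt ((z - 0.148) ^ 2 + 1) with hsdef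
  have hR : (0:ℝ) < 2 * z ^ 3 + (1 - 2 * z ^ 2) * 0.148 := by nlinarith
  have hf : (0:ℝ) < 2 * z ^ 2 - 1 := by nlinarith
  have key : ((2 * z ^ 2 - 1) * s) ^ 2 > (2 * z ^ 3 + (1 - 2 * z ^ 2) * 0.148) ^ 2 := by
    have ht : (0:ℝ) ≤ z - 5.148 := by linarith
    nlinarith [hs2, pow_nonneg ht 3, pow_nonneg ht 2, ht]
  nlinarith [key, mul_pos hf hs0, hR]

lemma hCneg (z : ℝ) (hz : (5.148:ℝ) ≤ z) : Cfun z < 0 := by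
  have hs0 : 0 < Real.sqrt ((z - 0.148) ^ 2 + 1) := Real.sqrt_pos.2 (by positivity)
  have h1 : (0:ℝ) < z ^ 2 - z + 1 := by nlinarith
  rw [Cfun]
  nlinarith

/-- Root package for `z ≥ 5.148`. -/
lemma root_spec (z : ℝ) (hz : (5.148:ℝ) ≤ z) :
    0 < iroot0 z ∧
    Afun z * iroot0 z ^ 2 + Bfun z * iroot0 z + Cfun z = 0 ∧
    (∀ x : ℝ, 0 < x → Afun z * x ^ 2 + Bfun z * x + Cfun z = 0 → x = iroot0 z) ∧
    (∀ x : ℝ, 0 < x → Afun z * x ^ 2 + Bfun z * x + Cfun z < 0 → x < iroot0 z) ∧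
    (∀ x : ℝ, 0 < x → 0 < Afun z * x ^ 2 + Bfun z * x + Cfun z → iroot0 z < x) := by
  have hA := hApos z hz
  have hC := hCneg z hz
  set A := Afun z with hAdef
  set B := Bfun z with hBdef
  set C := Cfun z with hCdef
  have hAC : 0 < A * (-C) := mul_pos hA (by linarith)
  have hdisc : (0:ℝ) ≤ B ^ 2 - 4 * A * C := by nlinarith
  set D := Real.sqrt (B ^ 2 - 4 * A * C) with hDdef
  have hD0 : 0 ≤ D := Real.sqrt_nonneg _
  have hD2 : D ^ 2 = B ^ 2 - 4 * A * C := Real.sq_sqrt hdisc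
  have hDB : |B| < D := by
    have h1 : Real.sqrt (B ^ 2) < D := Real.sqrt_lt_sqrt (sq_nonneg B) (by nlinarith)
    simpa [Real.sqrt_sq_eq_abs] using h1
  have hDB1 : -B < D := (neg_le_abs B).trans_lt hDB
  have hDB2 : B < D := (le_abs_self B).trans_lt hDB
  set r := iroot0 z with hrdef
  have hA2 : (2 * A) ≠ 0 := by positivity
  have h2Ar : 2 * A * r = -B + D := by
    rw [hrdef, iroot0, ← hAdef, ← hBdef, ← hCdef, ← hDdef]
    field_simp
  have hrpos : 0 < r := by
    have hnum : 0 < -B + D := by linarith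
    have : 0 < 2 * A * r := by rw [h2Ar]; exact hnum
    nlinarith
  have hsq : (2 * A * r) ^ 2 = (-B + D) ^ 2 := by rw [h2Ar]
  have h4 : 4 * A * (A * r ^ 2 + B * r + C) = 0 := by
    linear_combination hsq + hD2 + 2 * B * h2Ar
  have hroot : A * r ^ 2 + B * r + C = 0 := by
    have h4A : (4 * A) ≠ 0 := by positivity
    exact (mul_eq_zero.1 h4).resolve_left h4A
  have hArB : 0 < A * r + B := by nlinarith [h2Ar]
  have hfac : ∀ x : ℝ, A * x ^ 2 + B * x + C = (x - r) * (A * x + (A * r + B)) := by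
    intro x
    have : A * x ^ 2 + B * x + C - (A * r ^ 2 + B * r + C) = (x - r) * (A * x + (A * r + B)) := by
      ring
    linarith [hroot, this]
  refine ⟨hrpos, hroot, ?_, ?_, ?_⟩
  · intro x hx hx0
    have h2 : 0 < A * x + (A * r + B) := by nlinarith [mul_pos hA hx]
    have := hfac x
    rw [hx0] at this
    rcases mul_eq_zero.1 this.symm with h | h
    · linarith
    · linarith
  · intro x hx hx0
    have h2 : 0 < A * x + (A * r + B) := by nlinarith [mul_pos hA hx]
    by_contra hcon
    push_neg at hcon
    nlinarith [hfac x, mul_nonneg (by linarith : (0:ℝ) ≤ x - r) h2.le]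
  · intro x hx hx0
    have h2 : 0 < A * x + (A * r + B) := by nlinarith [mul_pos hA hx]
    by_contra hcon
    push_neg at hcon
    nlinarith [hfac x, mul_nonneg (by linarith : (0:ℝ) ≤ r - x) h2.le]

lemma qsign_pos (z s d : ℝ) (hz : (10:ℝ) ≤ z) (hd0 : 0 < d) (hd1 : d ≤ 1)
    (hdz : 100 ≤ d * z) (hs0 : 0 < s) (hs2 : s ^ 2 = (z - 0.148) ^ 2 + 1) :
    0 < ((2 * z ^ 2 - 1) * s - (2 * z ^ 3 + (1 - 2 * z ^ 2) * 0.148)) * (z + 1 - 0.148 + d) ^ 2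
      + (z - 2) * (s + 0.148) * (z + 1 - 0.148 + d) - (z ^ 2 - z + 1) * (s + 0.148) := by
  have hw : (0:ℝ) < z - 0.148 := by linarith
  have hz0 : (0:ℝ) < z := by linarith
  have hP : (0:ℝ) ≤ (2 * z ^ 2 - 1) * (z + 1 - 0.148 + d) ^ 2
      + (z - 2) * (z + 1 - 0.148 + d) - (z ^ 2 - z + 1) := by
    linarith [mul_nonneg (by nlinarith : (0:ℝ) ≤ 1 - d ^ 2) (by norm_num : (0:ℝ) ≤ 1),
      mul_nonneg (by linarith : (0:ℝ) ≤ 1 - d) hz0.le,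
      (by linarith : (0:ℝ) ≤ 1 - d),
      mul_nonneg (by linarith : (0:ℝ) ≤ z - 10) hz0.le,
      (by nlinarith : (0:ℝ) ≤ z ^ 2 - 100),
      sq_nonneg z,
      mul_nonneg hd0.le (sq_nonneg z),
      mul_nonneg (sq_nonneg d) (sq_nonneg z),
      pow_nonneg hz0.le 3,
      mul_nonneg hd0.le (pow_nonneg hz0.le 3),
      pow_nonneg hz0.le 4]
  have hs3 : 0 ≤ 8 * (z - 0.148) ^ 3 * s - (8 * (z - 0.148) ^ 4 + 4 * (z - 0.148) ^ 2 - 1) := by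
    have hR : (0:ℝ) < 8 * (z - 0.148) ^ 4 + 4 * (z - 0.148) ^ 2 - 1 := by nlinarith
    have hL : (0:ℝ) < 8 * (z - 0.148) ^ 3 * s := by positivity
    have hsq : (8 * (z - 0.148) ^ 3 * s) ^ 2 > (8 * (z - 0.148) ^ 4 + 4 * (z - 0.148) ^ 2 - 1) ^ 2 := by
      nlinarith [hs2, sq_nonneg (z - 0.148), hw]
    nlinarith [hsq, hL, hR]
  have hG : (0:ℝ) <
      ((2 * z ^ 2 - 1) * (z + 1 - 0.148 + d) ^ 2 + (z - 2) * (z + 1 - 0.148 + d)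
          - (z ^ 2 - z + 1)) * (8 * (z - 0.148) ^ 4 + 4 * (z - 0.148) ^ 2 - 1)
      + 8 * (z - 0.148) ^ 3 *
        (-(2 * z ^ 3 + (1 - 2 * z ^ 2) * 0.148) * (z + 1 - 0.148 + d) ^ 2
          + 0.148 * (z - 2) * (z + 1 - 0.148 + d) - 0.148 * (z ^ 2 - z + 1)) := by
    linarith [mul_nonneg (by linarith : (0:ℝ) ≤ d * z - 100) (pow_nonneg hz0.le 4),
      mul_nonneg (by linarith : (0:ℝ) ≤ 1 - d) (pow_nonneg hz0.le 4),
      mul_nonneg (by nlinarith : (0:ℝ) ≤ 1 - d ^ 2) (sq_nonneg z),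
      mul_nonneg (by linarith : (0:ℝ) ≤ 1 - d) (sq_nonneg z),
      mul_nonneg (by nlinarith : (0:ℝ) ≤ z ^ 2 - 100) (sq_nonneg z),
      hd0.le, sq_nonneg d, hz0.le,
      mul_nonneg hd0.le hz0.le,
      mul_nonneg (sq_nonneg d) hz0.le,
      sq_nonneg z,
      mul_nonneg hd0.le (sq_nonneg z),
      mul_nonneg (sq_nonneg d) (sq_nonneg z),
      pow_nonneg hz0.le 3,
      mul_nonneg hd0.le (pow_nonneg hz0.le 3),
      mul_nonneg (sq_nonneg d) (pow_nonneg hz0.le 3),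
      pow_nonneg hz0.le 4,
      mul_nonneg hd0.le (pow_nonneg hz0.le 4)]
  nlinarith [mul_nonneg hP hs3, hG, pow_pos hw 3]

lemma qsign_neg (z s d : ℝ) (hz : (10:ℝ) ≤ z) (hd0 : 0 < d) (hd1 : d ≤ 1)
    (hdz : 100 ≤ d * z) (hs0 : 0 < s) (hs2 : s ^ 2 = (z - 0.148) ^ 2 + 1) :
    ((2 * z ^ 2 - 1) * s - (2 * z ^ 3 + (1 - 2 * z ^ 2) * 0.148)) * (z + 1 - 0.148 - d) ^ 2
      + (z - 2) * (s + 0.148) * (z + 1 - 0.148 - d) - (z ^ 2 - z + 1) * (s + 0.148) < 0 := by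
  have hw : (0:ℝ) < z - 0.148 := by linarith
  have hz0 : (0:ℝ) < z := by linarith
  have hP : (0:ℝ) ≤ (2 * z ^ 2 - 1) * (z + 1 - 0.148 - d) ^ 2
      + (z - 2) * (z + 1 - 0.148 - d) - (z ^ 2 - z + 1) := by
    linarith [mul_nonneg (by linarith : (0:ℝ) ≤ 1 - d) (pow_nonneg hz0.le 3),
      mul_nonneg (by linarith : (0:ℝ) ≤ 1 - d) (sq_nonneg z),
      mul_nonneg (by nlinarith : (0:ℝ) ≤ 1 - d ^ 2) (by norm_num : (0:ℝ) ≤ 1),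
      mul_nonneg (by linarith : (0:ℝ) ≤ z - 10) (pow_nonneg hz0.le 3),
      mul_nonneg (by linarith : (0:ℝ) ≤ z - 10) (sq_nonneg z),
      mul_nonneg (by linarith : (0:ℝ) ≤ z - 10) hz0.le,
      (by nlinarith : (0:ℝ) ≤ z ^ 2 - 100),
      hd0.le, hz0.le,
      mul_nonneg hd0.le hz0.le,
      sq_nonneg z,
      mul_nonneg (sq_nonneg d) (sq_nonneg z),
      pow_nonneg hz0.le 3,
      pow_nonneg hz0.le 4]
  have hsu : 0 ≤ (2 * (z - 0.148) ^ 2 + 1) - 2 * (z - 0.148) * s := by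
    have h1 : z - 0.148 ≤ s := by nlinarith
    nlinarith [mul_nonneg (by linarith : (0:ℝ) ≤ s - (z - 0.148)) hw.le]
  have hG : ((2 * z ^ 2 - 1) * (z + 1 - 0.148 - d) ^ 2 + (z - 2) * (z + 1 - 0.148 - d)
          - (z ^ 2 - z + 1)) * (2 * (z - 0.148) ^ 2 + 1)
      + 2 * (z - 0.148) *
        (-(2 * z ^ 3 + (1 - 2 * z ^ 2) * 0.148) * (z + 1 - 0.148 - d) ^ 2
          + 0.148 * (z - 2) * (z + 1 - 0.148 - d) - 0.148 * (z ^ 2 - z + 1)) < 0 := by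
    linarith [mul_nonneg (by linarith : (0:ℝ) ≤ d * z - 100) (sq_nonneg z),
      mul_nonneg (by nlinarith : (0:ℝ) ≤ 1 - d ^ 2) hz0.le,
      mul_nonneg (by linarith : (0:ℝ) ≤ 1 - d) (sq_nonneg z),
      (by linarith : (0:ℝ) ≤ 1 - d),
      (by nlinarith : (0:ℝ) ≤ z ^ 2 - 100),
      mul_nonneg (by linarith : (0:ℝ) ≤ z - 10) hz0.le,
      sq_nonneg d, hz0.le,
      mul_nonneg hd0.le hz0.le,
      mul_nonneg (sq_nonneg d) hz0.le,
      sq_nonneg z]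
  nlinarith [mul_nonneg hP hsu, hG, hw]

/-- For `z ≥ 5 + 0.148`, one has `A(z) > 0` and `C(z) < 0`, so the quadratic
`p_z(i) = A(z)i² + B(z)i + C(z)` has a unique positive real root `i(z)`, and
`lim_{z→∞} (i(z) − z) = 1 − 0.148`. -/
theorem quadratic_root_asymptotics :
    ∃ iroot : ℝ → ℝ,
      (∀ z : ℝ, z ≥ 5 + 0.148 →
        Afun z > 0 ∧ Cfun z < 0 ∧
        0 < iroot z ∧
        Afun z * iroot z ^ 2 + Bfun z * iroot z + Cfun z = 0 ∧
        ∀ x : ℝ, 0 < x → Afun z * x ^ 2 + Bfun z * x + Cfun z = 0 → x = iroot z) ∧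
      Tendsto (fun z : ℝ => iroot z - z) atTop (nhds (1 - 0.148)) := by
  refine ⟨iroot0, fun z hz => ?_, ?_⟩
  · have hz' : (5.148:ℝ) ≤ z := by
      have : (5:ℝ) + 0.148 ≤ z := hz
      norm_num at this ⊢
      linarith
    obtain ⟨h1, h2, h3, _, _⟩ := root_spec z hz'
    exact ⟨hApos z hz', hCneg z hz', h1, h2, h3⟩
  · rw [Metric.tendsto_nhds]
    intro ε hε
    rw [eventually_atTop]
    set d := min ε 1 with hddef
    have hd0 : 0 < d := lt_min hε one_pos
    have hd1 : d ≤ 1 := min_le_right _ _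
    have hdε : d ≤ ε := min_le_left _ _
    refine ⟨max 10 (100 / d), fun z hzM => ?_⟩
    have hz10 : (10:ℝ) ≤ z := le_trans (le_max_left _ _) hzM
    have hdz : 100 ≤ d * z := by
      have h1 : 100 / d ≤ z := le_trans (le_max_right _ _) hzM
      have h2 : d * (100 / d) ≤ d * z := mul_le_mul_of_nonneg_left h1 hd0.le
      rwa [mul_div_cancel₀ _ hd0.ne'] at h2
    have hz' : (5.148:ℝ) ≤ z := by linarith
    obtain ⟨hrpos, hroot, huniq, hlt, hgt⟩ := root_spec z hz'
    have hs0 : 0 < Real.sqrt ((z - 0.148) ^ 2 + 1) := Real.sqrt_pos.2 (by positivity)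
    have hs2 : (Real.sqrt ((z - 0.148) ^ 2 + 1)) ^ 2 = (z - 0.148) ^ 2 + 1 :=
      Real.sq_sqrt (by positivity)
    have hub := qsign_pos z _ d hz10 hd0 hd1 hdz hs0 hs2
    have hlb := qsign_neg z _ d hz10 hd0 hd1 hdz hs0 hs2
    have hub' : 0 < Afun z * (z + 1 - 0.148 + d) ^ 2 + Bfun z * (z + 1 - 0.148 + d) + Cfun z := by
      rw [Afun, Bfun, Cfun]; linarith [hub]
    have hlb' : Afun z * (z + 1 - 0.148 - d) ^ 2 + Bfun z * (z + 1 - 0.148 - d) + Cfun z < 0 := by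
      rw [Afun, Bfun, Cfun]; linarith [hlb]
    have h1 := hgt _ (by linarith : (0:ℝ) < z + 1 - 0.148 + d) hub'
    have h2 := hlt _ (by linarith : (0:ℝ) < z + 1 - 0.148 - d) hlb'
    have : dist (iroot0 z - z) (1 - 0.148) < ε := by
      rw [Real.dist_eq, abs_lt]
      constructor <;> linarith
    exact this
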